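/- Let A be a unital Banach algebra and let (a_t)_{t∈ℕ} be a bounded sequence in A and x ∈ A. If the commutator [a_t, x] tends to 0 as t → ∞, then exp(x + a_t) − exp(x)·exp(a_t) tends to 0 as t → ∞. -/

import Mathlib

open Filter Topology NormedSpace

/-! The path `s ↦ exp ((1 - s) • (x + b)) * exp (s • x) * exp (s • b)` runs from `exp (x + b)`
to `exp x * exp b`, and its derivative is `exp ((1 - s) • (x + b)) * [exp (s • x), b] * exp (s • b)`.
The same trick on `u ↦ exp ((1 - u) • y) * b * exp (u • y)` bounds `[exp y, b]` by a multiple of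
`[y, b]`, so the mean value inequality gives
`‖exp (x + b) - exp x * exp b‖ ≤ C(‖x‖, ‖b‖) * ‖[x, b]‖`, uniformly for `b` in a bounded set. -/

-- `max ‖1‖ 1` rather than `1`: without `NormOneClass`, `‖1‖` may exceed `1`.
lemma norm_pow_le_max_norm_one_mul {R : Type*} [NormedRing R] (y : R) (n : ℕ) :
    ‖y ^ n‖ ≤ max ‖(1 : R)‖ 1 * ‖y‖ ^ n := by
  rcases n.eq_zero_or_pos with rfl | hn
  · simp
  · calc ‖y ^ n‖ ≤ ‖y‖ ^ n := norm_pow_le' y hn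
      _ ≤ max ‖(1 : R)‖ 1 * ‖y‖ ^ n := le_mul_of_one_le_left (by positivity) (le_max_right _ _)

section

variable {A : Type*} [NormedRing A] [NormedAlgebra ℝ A] [CompleteSpace A]

lemma norm_exp_le (y : A) : ‖exp y‖ ≤ max ‖(1 : A)‖ 1 * Real.exp ‖y‖ := by
  refine (exp_series_hasSum_exp' (𝕂 := ℝ) y).norm_le_of_bounded
    (((Real.exp_eq_exp_ℝ ▸ expSeries_div_hasSum_exp ‖y‖)).mul_left (max ‖(1 : A)‖ 1)) fun n => ?_
  rw [norm_smul, Real.norm_of_nonneg (by positivity), mul_div_assoc', mul_comm, div_eq_mul_inv]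
  exact mul_le_mul_of_nonneg_right (norm_pow_le_max_norm_one_mul y n) (by positivity)

lemma hasDerivAt_exp_one_sub_smul (y : A) (s : ℝ) :
    HasDerivAt (fun u : ℝ => exp ((1 - u) • y)) (-(exp ((1 - s) • y) * y)) s :=
  (hasDerivAt_exp_smul_const y (1 - s)).comp_const_sub 1 s

lemma norm_exp_smul_le (y : A) {s : ℝ} (hs : 0 ≤ s) :
    ‖exp (s • y)‖ ≤ max ‖(1 : A)‖ 1 * Real.exp (s * ‖y‖) := by
  simpa [norm_smul, abs_of_nonneg hs] using norm_exp_le (s • y)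

lemma norm_exp_mul_sub_mul_exp_le (y b : A) :
    ‖exp y * b - b * exp y‖ ≤ max ‖(1 : A)‖ 1 ^ 2 * Real.exp ‖y‖ * ‖y * b - b * y‖ := by
  set M := max ‖(1 : A)‖ 1
  have hderiv (s : ℝ) : HasDerivAt (fun u : ℝ => exp ((1 - u) • y) * b * exp (u • y))
      (exp ((1 - s) • y) * (b * y - y * b) * exp (s • y)) s :=
    (((hasDerivAt_exp_one_sub_smul y s).mul_const b).mul
      (hasDerivAt_exp_smul_const' y s)).congr_deriv (by noncomm_ring)
  have hmvt := norm_image_sub_le_of_norm_deriv_le_segment_01'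
    (fun s _ => (hderiv s).hasDerivWithinAt) (C := M ^ 2 * Real.exp ‖y‖ * ‖y * b - b * y‖)
    fun s hs => by
      calc _ ≤ ‖exp ((1 - s) • y)‖ * ‖b * y - y * b‖ * ‖exp (s • y)‖ := norm_mul₃_le
        _ ≤ (M * Real.exp ((1 - s) * ‖y‖)) * ‖y * b - b * y‖ * (M * Real.exp (s * ‖y‖)) := by
          rw [norm_sub_rev]
          gcongr
          exacts [norm_exp_smul_le y (sub_nonneg.2 hs.2.le), norm_exp_smul_le y hs.1]
        _ = M ^ 2 * Real.exp ‖y‖ * ‖y * b - b * y‖ := by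
          have hexp : Real.exp ((1 - s) * ‖y‖) * Real.exp (s * ‖y‖) = Real.exp ‖y‖ := by
            rw [← Real.exp_add]; congr 1; ring
          rw [← hexp]; ring
  simpa [norm_sub_rev] using hmvt

lemma norm_exp_add_sub_exp_mul_exp_le (x b : A) :
    ‖exp (x + b) - exp x * exp b‖ ≤
      max ‖(1 : A)‖ 1 ^ 4 * Real.exp (‖x‖ + ‖b‖) * ‖x * b - b * x‖ := by
  set M := max ‖(1 : A)‖ 1
  have hderiv (s : ℝ) :
      HasDerivAt (fun u : ℝ => exp ((1 - u) • (x + b)) * exp (u • x) * exp (u • b))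
        (exp ((1 - s) • (x + b)) * (exp (s • x) * b - b * exp (s • x)) * exp (s • b)) s :=
    (((hasDerivAt_exp_one_sub_smul (x + b) s).mul (hasDerivAt_exp_smul_const' x s)).mul
      (hasDerivAt_exp_smul_const' b s)).congr_deriv (by simp only [Pi.mul_apply]; noncomm_ring)
  have hmvt := norm_image_sub_le_of_norm_deriv_le_segment_01'
    (fun s _ => (hderiv s).hasDerivWithinAt)
    (C := M ^ 4 * Real.exp (‖x‖ + ‖b‖) * ‖x * b - b * x‖) fun s hs => by
      have hF : ‖exp ((1 - s) • (x + b))‖ ≤ M * Real.exp ((1 - s) * (‖x‖ + ‖b‖)) :=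
        (norm_exp_smul_le _ (sub_nonneg.2 hs.2.le)).trans
          (by gcongr; exacts [sub_nonneg.2 hs.2.le, norm_add_le x b])
      have hX : ‖exp (s • x) * b - b * exp (s • x)‖ ≤
          M ^ 2 * Real.exp (s * ‖x‖) * (s * ‖x * b - b * x‖) := by
        grw [norm_exp_mul_sub_mul_exp_le]
        rw [smul_mul_assoc, mul_smul_comm, ← smul_sub, norm_smul, norm_smul,
          Real.norm_of_nonneg hs.1]
      calc _ ≤ ‖exp ((1 - s) • (x + b))‖ * ‖exp (s • x) * b - b * exp (s • x)‖ *
              ‖exp (s • b)‖ := norm_mul₃_le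
        _ ≤ (M * Real.exp ((1 - s) * (‖x‖ + ‖b‖))) *
              (M ^ 2 * Real.exp (s * ‖x‖) * (s * ‖x * b - b * x‖)) *
              (M * Real.exp (s * ‖b‖)) := by
          have hX0 : 0 ≤ M ^ 2 * Real.exp (s * ‖x‖) * (s * ‖x * b - b * x‖) :=
            (norm_nonneg _).trans hX
          exact mul_le_mul (mul_le_mul hF hX (norm_nonneg _) (by positivity))
            (norm_exp_smul_le b hs.1) (norm_nonneg _) (by positivity)
        _ = M ^ 4 * Real.exp (‖x‖ + ‖b‖) * ‖x * b - b * x‖ * s := by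
          have hexp : Real.exp ((1 - s) * (‖x‖ + ‖b‖)) * Real.exp (s * ‖x‖) *
              Real.exp (s * ‖b‖) = Real.exp (‖x‖ + ‖b‖) := by
            rw [← Real.exp_add, ← Real.exp_add]; congr 1; ring
          rw [← hexp]; ring
        _ ≤ _ := mul_le_of_le_one_right (by positivity) hs.2.le
  simpa [norm_sub_rev] using hmvt

end

/-- In a unital Banach algebra, if `(a t)` is a bounded sequence and the
commutators `[a t, x]` tend to `0`, then `exp (x + a t) - exp x * exp (a t)` tends to `0`. -/
theorem stmt2 {A : Type*} [NormedRing A] [NormedAlgebra ℝ A] [CompleteSpace A]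
    (a : ℕ → A) (x : A) (C : ℝ) (hbdd : ∀ t, ‖a t‖ ≤ C)
    (hcomm : Tendsto (fun t => a t * x - x * a t) atTop (𝓝 0)) :
    Tendsto (fun t => NormedSpace.exp (x + a t) -
      NormedSpace.exp x * NormedSpace.exp (a t)) atTop (𝓝 0) := by
  rw [tendsto_zero_iff_norm_tendsto_zero]
  have hbound (t : ℕ) : ‖exp (x + a t) - exp x * exp (a t)‖ ≤
      max ‖(1 : A)‖ 1 ^ 4 * Real.exp (‖x‖ + C) * ‖a t * x - x * a t‖ := by
    grw [norm_exp_add_sub_exp_mul_exp_le, norm_sub_rev, hbdd t]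
  have hlim := (tendsto_zero_iff_norm_tendsto_zero.mp hcomm).const_mul
    (max ‖(1 : A)‖ 1 ^ 4 * Real.exp (‖x‖ + C))
  rw [mul_zero] at hlim
  exact squeeze_zero (fun t => norm_nonneg _) hbound hlim
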